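/- Assume the root system is simply laced, i.e. a_{i,j} ∈ {0, −1} for all distinct i, j ∈ I. Let λ, μ ∈ M be dominant weights, let N ≥ 1 be an integer, and let β be a positive root which is a sum of pairwise distinct simple roots, say β = α_{j_1} + ⋯ + α_{j_t} with j_1, …, j_t ∈ I pairwise distinct. Assume: (1) for every i ∈ I with min{⟨λ, α_i^∨⟩, ⟨μ, α_i^∨⟩} < N, the element β − α_i is neither zero nor a positive root; (2) λ + μ − Nβ is dominant. Then there exists a permutation σ of {1, …, t} such that the dominance system D((N, …, N); μ, λ; j_{σ(1)}, …, j_{σ(t)}) holds. -/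

import Mathlib

open Set Module Function

/-- A root system: a root pairing whose roots and coroots span (the definition of `RootSystem`
in the older Mathlib, where it was a structure extending `RootPairing`). -/
structure RootSystem (ι R M N : Type*) [CommRing R]
    [AddCommGroup M] [Module R M] [AddCommGroup N] [Module R N]
    extends RootPairing ι R M N where
  span_root_eq_top : Submodule.span R (range root) = ⊤
  span_coroot_eq_top : Submodule.span R (range coroot) = ⊤

/-- `b : I → ι` indexes a base of simple roots of the root system `P`: the map is injective,
the simple roots are linearly independent, and every root is either a nonnegative or a
nonpositive integer combination of the simple roots. -/
structure RootSystem.IsBase {ι M N I : Type*} [Fintype I]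
    [AddCommGroup M] [Module ℝ M] [AddCommGroup N] [Module ℝ N]
    (P : RootSystem ι ℝ M N) (b : I → ι) : Prop where
  injective : Function.Injective b
  linearIndependent : LinearIndependent ℝ fun i : I => P.root (b i)
  exists_coeffs : ∀ j : ι,
    (∃ c : I → ℕ, P.root j = ∑ i, (c i : ℝ) • P.root (b i)) ∨
    (∃ c : I → ℕ, P.root j = - ∑ i, (c i : ℝ) • P.root (b i))

/-- The root indexed by `j` is a positive root with respect to the base `b`: it is a
nonnegative integer combination of the simple roots. -/
def RootSystem.IsPositiveRoot {ι M N I : Type*} [Fintype I]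
    [AddCommGroup M] [Module ℝ M] [AddCommGroup N] [Module ℝ N]
    (P : RootSystem ι ℝ M N) (b : I → ι) (j : ι) : Prop :=
  ∃ c : I → ℕ, P.root j = ∑ i, (c i : ℝ) • P.root (b i)

/-- A weight `x ∈ M` is dominant if its pairing with every simple coroot is nonnegative. -/
def RootSystem.IsDominant {ι M N I : Type*}
    [AddCommGroup M] [Module ℝ M] [AddCommGroup N] [Module ℝ N]
    (P : RootSystem ι ℝ M N) (b : I → ι) (x : M) : Prop :=
  ∀ i : I, 0 ≤ P.coroot' (b i) x

/-- The closed dominant (fundamental) chamber `C_f`. -/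
def RootSystem.chamber {ι M N I : Type*}
    [AddCommGroup M] [Module ℝ M] [AddCommGroup N] [Module ℝ N]
    (P : RootSystem ι ℝ M N) (b : I → ι) : Set M :=
  {x : M | P.IsDominant b x}

/-- The polytope `P_{λ,μ}`: the convex hull of the orbit-translate `{λ + w μ : w ∈ W}`. -/
def RootSystem.orbitPolytope {ι M N : Type*}
    [AddCommGroup M] [Module ℝ M] [AddCommGroup N] [Module ℝ N]
    (P : RootSystem ι ℝ M N) (lam mu : M) : Set M :=
  convexHull ℝ {x : M | ∃ w ∈ P.weylGroup, x = lam + w • mu}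
/-- The dominance system `D((k_r); λ, μ; i_1, …, i_t)` of the paper:
`⟨μ, α_{i_r}^∨⟩ ≥ k_r + Σ_{s<r} k_s·a_{i_s,i_r}` for all `r` (for `r = 1` this is
`⟨μ, α_{i_1}^∨⟩ ≥ k_1`), and `⟨λ, α_{i_r}^∨⟩ ≥ k_r + Σ_{s>r} k_s·a_{i_s,i_r}` for all `r`
(for `r = t` this is `⟨λ, α_{i_t}^∨⟩ ≥ k_t`), where `a_{i,j} = ⟨α_i, α_j^∨⟩` are the
Cartan integers. -/
def RootSystem.DomSys {ι M N I : Type*}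
    [AddCommGroup M] [Module ℝ M] [AddCommGroup N] [Module ℝ N]
    (P : RootSystem ι ℝ M N) (b : I → ι) {t : ℕ}
    (k : Fin t → ℕ) (lam mu : M) (idx : Fin t → I) : Prop :=
  (∀ r : Fin t,
    (k r : ℝ) + ∑ s ∈ Finset.univ.filter (· < r),
      (k s : ℝ) * P.pairing (b (idx s)) (b (idx r)) ≤ P.coroot' (b (idx r)) mu) ∧
  (∀ r : Fin t,
    (k r : ℝ) + ∑ s ∈ Finset.univ.filter (r < ·),
      (k s : ℝ) * P.pairing (b (idx s)) (b (idx r)) ≤ P.coroot' (b (idx r)) lam)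


/-
Restrict the Dynkin graph to the support `j_1, …, j_t` of `β`. As the root system is simply
laced, `⟨∑_{s ∈ T} α_{j_s}, α_{j_r}^∨⟩ = 2 - deg_T(r)` for `r ∈ T`, so positive definiteness of
the canonical form forces every nonempty `T` to contain a vertex of degree at most one: the
graph is a forest. For a vertex `r` of degree at most one, `⟨β, α_{j_r}^∨⟩ > 0`, so `β - α_{j_r}`
is zero or a positive root, and hypothesis (1) gives `⟨λ, α_{j_r}^∨⟩, ⟨μ, α_{j_r}^∨⟩ ≥ N`.
Inserting the vertices of a forest one leaf at a time yields an order in which every vertex of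
degree at least two has a neighbour before it and one after it. In this order each inequality of
the dominance system either concerns a vertex of degree at most one, or has left side
`N - N·(number of earlier, resp. later, neighbours) ≤ 0`, and then holds by dominance.
-/

open Finset

-- Doubling `ord` frees the odd values, so a vertex can be inserted right next to any other.
lemma injOn_update_two_mul_of_odd {V : Type*} [DecidableEq V] {S : Finset V} {ord : V → ℤ}
    {v : V} (h : Set.InjOn ord (S.erase v)) {c : ℤ} (hc : Odd c) :
    Set.InjOn (update (fun x => 2 * ord x) v c) S := by
  obtain ⟨k, rfl⟩ := hc
  intro x hx y hy hxy
  by_cases hxv : x = v <;> by_cases hyv : y = v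
  · rw [hxv, hyv]
  · simp only [hxv, update_self, update_of_ne hyv] at hxy; omega
  · simp only [hyv, update_self, update_of_ne hxv] at hxy; omega
  · simp only [update_of_ne hxv, update_of_ne hyv] at hxy
    exact h (by simp [hxv, hx]) (by simp [hyv, hy]) (by omega)

namespace SimpleGraph

variable {V : Type*} (G : SimpleGraph V) [DecidableRel G.Adj]

def IsFlankedIn (S : Finset V) (ord : V → ℤ) (u : V) : Prop :=
  #{x ∈ S | G.Adj u x} ≤ 1 ∨
    (∃ x ∈ S, G.Adj u x ∧ ord x < ord u) ∧ (∃ x ∈ S, G.Adj u x ∧ ord u < ord x)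

def IsFlankingOrder (S : Finset V) (ord : V → ℤ) : Prop :=
  Set.InjOn ord S ∧ ∀ u ∈ S, G.IsFlankedIn S ord u

variable {G} [DecidableEq V] {S : Finset V} {ord : V → ℤ} {u v : V}

lemma IsFlankedIn.update_of_not_adj (h : G.IsFlankedIn (S.erase v) ord u) (c : ℤ)
    (huv : u ≠ v) (hadj : ¬ G.Adj u v) :
    G.IsFlankedIn S (update (fun x => 2 * ord x) v c) u := by
  have hnbr : {x ∈ S.erase v | G.Adj u x} = {x ∈ S | G.Adj u x} := by
    rw [filter_erase]
    exact erase_eq_of_notMem (by simp [hadj])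
  rcases h with hdeg | ⟨⟨x, hx, hux, hlt⟩, ⟨y, hy, huy, hgt⟩⟩
  · exact Or.inl (hnbr ▸ hdeg)
  · rw [mem_erase] at hx hy
    refine Or.inr ⟨⟨x, hx.2, hux, ?_⟩, ⟨y, hy.2, huy, ?_⟩⟩ <;>
      simp only [update_of_ne hx.1, update_of_ne hy.1, update_of_ne huv] <;> omega

lemma exists_isFlankedIn_update_of_adj (hinj : Set.InjOn ord (S.erase v)) (hv : v ∈ S)
    (hvu : G.Adj v u) (hu : u ∈ S) :
    ∃ c, Odd c ∧ G.IsFlankedIn S (update (fun x => 2 * ord x) v c) u := by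
  have huv : u ≠ v := hvu.ne'
  have hu' : u ∈ S.erase v := mem_erase.2 ⟨huv, hu⟩
  by_cases hlt : ∃ z ∈ S.erase v, G.Adj u z ∧ ord z < ord u
  · obtain ⟨z, hz, huz, hzu⟩ := hlt
    rw [mem_erase] at hz
    refine ⟨2 * ord u + 1, odd_two_mul_add_one _,
      Or.inr ⟨⟨z, hz.2, huz, ?_⟩, ⟨v, hv, hvu.symm, ?_⟩⟩⟩ <;>
      simp only [update_self, update_of_ne hz.1, update_of_ne huv] <;> omega
  by_cases hgt : ∃ z ∈ S.erase v, G.Adj u z ∧ ord u < ord z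
  · obtain ⟨z, hz, huz, huz'⟩ := hgt
    rw [mem_erase] at hz
    refine ⟨2 * ord u - 1, ⟨ord u - 1, by ring⟩,
      Or.inr ⟨⟨v, hv, hvu.symm, ?_⟩, ⟨z, hz.2, huz, ?_⟩⟩⟩ <;>
      simp only [update_self, update_of_ne hz.1, update_of_ne huv] <;> omega
  -- a neighbour `z ≠ v` of `u` lies neither before nor after `u`, so it would be `u` itself
  refine ⟨1, odd_one, Or.inl ((card_le_card fun z hz => ?_).trans (Finset.card_singleton v).le)⟩
  rw [mem_filter] at hz
  rw [Finset.mem_singleton]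
  by_contra hzv
  have hz' : z ∈ S.erase v := mem_erase.2 ⟨hzv, hz.1⟩
  have hord : ord z = ord u :=
    le_antisymm (not_lt.1 fun h => hgt ⟨z, hz', hz.2, h⟩) (not_lt.1 fun h => hlt ⟨z, hz', hz.2, h⟩)
  exact G.irrefl (hinj hz' hu' hord ▸ hz.2)

lemma IsFlankingOrder.exists_of_erase (h : G.IsFlankingOrder (S.erase v) ord) (hv : v ∈ S)
    (hdeg : #{x ∈ S | G.Adj v x} ≤ 1) : ∃ ord', G.IsFlankingOrder S ord' := by
  obtain ⟨c, hc, hnbr⟩ : ∃ c, Odd c ∧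
      ∀ w ∈ S, G.Adj v w → G.IsFlankedIn S (update (fun x => 2 * ord x) v c) w := by
    by_cases hex : ∃ w ∈ S, G.Adj v w
    · obtain ⟨w, hw, hvw⟩ := hex
      obtain ⟨c, hc, hflank⟩ := exists_isFlankedIn_update_of_adj h.1 hv hvw hw
      refine ⟨c, hc, fun w' hw' hvw' => ?_⟩
      rwa [card_le_one.1 hdeg w' (by simp [hw', hvw']) w (by simp [hw, hvw])]
    · push Not at hex
      exact ⟨1, odd_one, fun w hw hvw => absurd hvw (hex w hw)⟩
  refine ⟨_, injOn_update_two_mul_of_odd h.1 hc, fun u hu => ?_⟩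
  by_cases huv : u = v
  · exact Or.inl (huv ▸ hdeg)
  by_cases hvu : G.Adj v u
  · exact hnbr u hu hvu
  · exact (h.2 u (mem_erase.2 ⟨huv, hu⟩)).update_of_not_adj c huv fun h' => hvu h'.symm

theorem exists_isFlankingOrder
    (hG : ∀ T : Finset V, T.Nonempty → ∃ v ∈ T, #{x ∈ T | G.Adj v x} ≤ 1) (S : Finset V) :
    ∃ ord, G.IsFlankingOrder S ord := by
  induction S using Finset.strongInduction with
  | H S ih =>
    rcases S.eq_empty_or_nonempty with rfl | hS
    · exact ⟨0, by simp [IsFlankingOrder]⟩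
    obtain ⟨v, hv, hdeg⟩ := hG S hS
    obtain ⟨ord, hord⟩ := ih _ (erase_ssubset hv)
    exact hord.exists_of_erase hv hdeg

lemma IsFlankingOrder.sort {t : ℕ} {G : SimpleGraph (Fin t)} [DecidableRel G.Adj]
    {ord : Fin t → ℤ} (h : G.IsFlankingOrder univ ord) (r : Fin t) :
    #{s | G.Adj (Tuple.sort ord r) s} ≤ 1 ∨
      (∃ s < r, G.Adj (Tuple.sort ord r) (Tuple.sort ord s)) ∧
      (∃ s, r < s ∧ G.Adj (Tuple.sort ord r) (Tuple.sort ord s)) := by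
  set σ := Tuple.sort ord
  have hinj : Injective ord := fun x y hxy => h.1 (by simp) (by simp) hxy
  have hmono : StrictMono (ord ∘ σ) :=
    (Tuple.monotone_sort ord).strictMono_of_injective (hinj.comp σ.injective)
  rcases h.2 (σ r) (mem_univ _) with hdeg | ⟨⟨x, -, hx, hlt⟩, ⟨y, -, hy, hgt⟩⟩
  · exact Or.inl hdeg
  · refine Or.inr ⟨⟨σ.symm x, ?_, by simpa using hx⟩, ⟨σ.symm y, ?_, by simpa using hy⟩⟩
    · rw [← hmono.lt_iff_lt]; simpa using hlt
    · rw [← hmono.lt_iff_lt]; simpa using hgt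

end SimpleGraph

namespace RootPairing

variable {ι R M N : Type*} [Fintype ι] [CommRing R] [AddCommGroup M] [Module R M]
  [AddCommGroup N] [Module R N] (P : RootPairing ι R M N)

lemma rootForm_root_self_mul_coroot' (i : ι) (x : M) :
    P.RootForm (P.root i) (P.root i) * P.coroot' i x = 2 * P.RootForm (P.root i) x := by
  have h := congrArg (P.toLinearMap x) (P.rootForm_self_smul_coroot i)
  rwa [map_smul, map_nsmul, toLinearMap_apply_apply_Polarization, nsmul_eq_mul, Nat.cast_ofNat,
    smul_eq_mul] at h

end RootPairing

namespace RootSystem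

variable {ι M N I : Type*} [AddCommGroup M] [Module ℝ M] [AddCommGroup N] [Module ℝ N]
  (P : RootSystem ι ℝ M N) (b : I → ι)

def dynkinGraph : SimpleGraph I where
  Adj i j := i ≠ j ∧ P.pairing (b i) (b j) ≠ 0
  symm := ⟨fun _ _ h => ⟨h.1.symm, fun h' => h.2 (P.pairing_eq_zero_iff'.2 h')⟩⟩
  loopless := ⟨fun _ h => h.1 rfl⟩

noncomputable instance : DecidableRel (P.dynkinGraph b).Adj := Classical.decRel _

def IsSimplyLaced : Prop :=
  ∀ i j : I, i ≠ j → P.pairing (b i) (b j) = 0 ∨ P.pairing (b i) (b j) = -1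

variable {P b} {κ : Type*} {idx : κ → I}

lemma IsSimplyLaced.pairing_eq [DecidableEq κ] (h : P.IsSimplyLaced b) (hidx : Injective idx)
    (r s : κ) :
    P.pairing (b (idx s)) (b (idx r)) =
      (if s = r then 2 else 0) - (if (P.dynkinGraph b).Adj (idx r) (idx s) then 1 else 0) := by
  by_cases hsr : s = r
  · subst hsr
    simp [RootPairing.pairing_same]
  have hne : idx s ≠ idx r := hidx.ne hsr
  have hzero : P.pairing (b (idx s)) (b (idx r)) = 0 ↔ P.pairing (b (idx r)) (b (idx s)) = 0 :=
    P.pairing_eq_zero_iff'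
  rcases h _ _ hne with h0 | h1
  · simp [dynkinGraph, hsr, h0, ← hzero]
  · simp [dynkinGraph, hsr, h1, ← hzero, hne.symm]

lemma IsSimplyLaced.sum_pairing [DecidableEq κ] (h : P.IsSimplyLaced b) (hidx : Injective idx)
    (T : Finset κ) (r : κ) :
    ∑ s ∈ T, P.pairing (b (idx s)) (b (idx r)) =
      (if r ∈ T then 2 else 0) - #{s ∈ T | (P.dynkinGraph b).Adj (idx r) (idx s)} := by
  simp only [h.pairing_eq hidx, sum_sub_distrib, sum_ite_eq', sum_boole]

lemma IsSimplyLaced.coroot'_sum_root [DecidableEq κ] (h : P.IsSimplyLaced b)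
    (hidx : Injective idx) (T : Finset κ) (r : κ) :
    P.coroot' (b (idx r)) (∑ s ∈ T, P.root (b (idx s))) =
      (if r ∈ T then 2 else 0) - #{s ∈ T | (P.dynkinGraph b).Adj (idx r) (idx s)} := by
  simp only [map_sum, RootPairing.root_coroot'_eq_pairing, h.sum_pairing hidx]

lemma IsSimplyLaced.exists_card_adj_le_one [Fintype ι] (h : P.IsSimplyLaced b)
    (hli : LinearIndependent ℝ fun i => P.root (b i)) (hidx : Injective idx)
    {T : Finset κ} (hT : T.Nonempty) :
    ∃ r ∈ T, #{s ∈ T | (P.dynkinGraph b).Adj (idx r) (idx s)} ≤ 1 := by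
  classical
  by_contra! hdeg
  set γ := ∑ s ∈ T, P.root (b (idx s))
  have hγ : γ ≠ 0 := by
    obtain ⟨r, hr⟩ := hT
    intro h0
    exact one_ne_zero <|
      linearIndependent_iff'.1 (hli.comp idx hidx) T (fun _ => 1) (by simpa using h0) r hr
  have hterm : ∀ r ∈ T, P.RootForm (P.root (b (idx r))) γ ≤ 0 := by
    intro r hr
    have hdeg' : (2 : ℝ) ≤ #{s ∈ T | (P.dynkinGraph b).Adj (idx r) (idx s)} := by
      exact_mod_cast hdeg r hr
    have hcoroot := h.coroot'_sum_root hidx T r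
    rw [if_pos hr] at hcoroot
    nlinarith [P.rootForm_root_self_mul_coroot' (b (idx r)) γ,
      P.zero_le_rootForm (P.root (b (idx r)))]
  have hγγ : P.RootForm γ γ ≤ 0 := by
    calc P.RootForm γ γ = ∑ r ∈ T, P.RootForm (P.root (b (idx r))) γ := by
          rw [← LinearMap.sum_apply, ← map_sum]
      _ ≤ 0 := sum_nonpos hterm
  have hγspan : γ ∈ P.rootSpan ℝ := sum_mem fun s _ => Submodule.subset_span ⟨_, rfl⟩
  exact hγγ.not_gt (P.rootForm_pos_of_ne_zero hγspan hγ)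

lemma IsSimplyLaced.root_sub_mem_range [Fintype ι] [Fintype κ] (hcrys : P.IsCrystallographic)
    (h : P.IsSimplyLaced b) (hidx : Injective idx) {j : ι}
    (hj : P.root j = ∑ s, P.root (b (idx s))) {r : κ}
    (hr : #{s | (P.dynkinGraph b).Adj (idx r) (idx s)} ≤ 1) (hne : j ≠ b (idx r)) :
    P.root j - P.root (b (idx r)) ∈ range P.root := by
  classical
  have hpos : 0 < P.pairingIn ℤ j (b (idx r)) := by
    have hr' : (#{s | (P.dynkinGraph b).Adj (idx r) (idx s)} : ℝ) ≤ 1 := by exact_mod_cast hr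
    have hpair := h.coroot'_sum_root hidx univ r
    rw [if_pos (Finset.mem_univ r), ← hj, RootPairing.root_coroot'_eq_pairing,
      ← P.algebraMap_pairingIn ℤ] at hpair
    have : (0 : ℝ) < algebraMap ℤ ℝ (P.pairingIn ℤ j (b (idx r))) := by linarith
    simpa using this
  exact P.root_sub_root_mem_of_pairingIn_pos hpos hne

lemma isPositiveRoot_of_root_eq_sum [Fintype I] {j : ι} (T : Finset κ)
    (h : P.root j = ∑ s ∈ T, P.root (b (idx s))) : P.IsPositiveRoot b j := by
  classical
  refine ⟨fun i => #{s ∈ T | idx s = i}, ?_⟩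
  rw [h, ← sum_fiberwise T idx]
  refine sum_congr rfl fun i _ => ?_
  rw [sum_congr rfl fun s hs => by rw [(mem_filter.1 hs).2], sum_const, Nat.cast_smul_eq_nsmul]

lemma IsSimplyLaced.natCast_add_sum_le [DecidableEq κ] (h : P.IsSimplyLaced b)
    (hidx : Injective idx) {T : Finset κ} {r : κ} (hr : r ∉ T) (n : ℕ) {x : ℝ}
    (hx : 0 ≤ x)
    (hT : (n : ℝ) ≤ x ∨ ∃ s ∈ T, (P.dynkinGraph b).Adj (idx r) (idx s)) :
    (n : ℝ) + ∑ s ∈ T, (n : ℝ) * P.pairing (b (idx s)) (b (idx r)) ≤ x := by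
  rw [← mul_sum, h.sum_pairing hidx, if_neg hr, zero_sub]
  rcases hT with hn | ⟨s, hs, hadj⟩
  · nlinarith [(n.cast_nonneg : (0 : ℝ) ≤ n),
      ((#{s ∈ T | (P.dynkinGraph b).Adj (idx r) (idx s)}).cast_nonneg : (0 : ℝ) ≤ _)]
  · have hdeg : (1 : ℝ) ≤ #{s ∈ T | (P.dynkinGraph b).Adj (idx r) (idx s)} := by
      exact_mod_cast card_pos.2 ⟨s, mem_filter.2 ⟨hs, hadj⟩⟩
    nlinarith [(n.cast_nonneg : (0 : ℝ) ≤ n)]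

lemma IsSimplyLaced.domSys_const (h : P.IsSimplyLaced b) {t : ℕ} {idx : Fin t → I}
    (hidx : Injective idx) {lam mu : M} (hlam : P.IsDominant b lam) (hmu : P.IsDominant b mu)
    (n : ℕ)
    (hbefore : ∀ r, (n : ℝ) ≤ P.coroot' (b (idx r)) mu ∨
      ∃ s < r, (P.dynkinGraph b).Adj (idx r) (idx s))
    (hafter : ∀ r, (n : ℝ) ≤ P.coroot' (b (idx r)) lam ∨
      ∃ s, r < s ∧ (P.dynkinGraph b).Adj (idx r) (idx s)) :
    P.DomSys b (fun _ => n) lam mu idx :=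
  ⟨fun r => h.natCast_add_sum_le hidx (by simp) n (hmu _) (by simpa using hbefore r),
    fun r => h.natCast_add_sum_le hidx (by simp) n (hlam _) (by simpa using hafter r)⟩

end RootSystem

theorem wahl_domsys_general {ι M N' I : Type*} [Fintype ι] [Fintype I]
    [AddCommGroup M] [Module ℝ M] [AddCommGroup N'] [Module ℝ N']
    (P : RootSystem ι ℝ M N') (hcrys : P.IsCrystallographic)
    (b : I → ι) (hb : P.IsBase b)
    (hSL : ∀ i j : I, i ≠ j →
      P.pairing (b i) (b j) = 0 ∨ P.pairing (b i) (b j) = -1)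
    (lam mu : M) (hlam : P.IsDominant b lam) (hmu : P.IsDominant b mu)
    (Nnat : ℕ)
    {t : ℕ} (jdx : Fin t → I) (hinj : Function.Injective jdx)
    (hroot : ∃ jβ : ι, P.root jβ = ∑ r : Fin t, P.root (b (jdx r)) ∧ P.IsPositiveRoot b jβ)
    (hF : ∀ i : I, min (P.coroot' (b i) lam) (P.coroot' (b i) mu) < (Nnat : ℝ) →
      (∑ r : Fin t, P.root (b (jdx r))) - P.root (b i) ≠ 0 ∧
      ¬ ∃ j' : ι, P.root j' = (∑ r : Fin t, P.root (b (jdx r))) - P.root (b i) ∧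
        P.IsPositiveRoot b j') :
    ∃ σ : Equiv.Perm (Fin t), P.DomSys b (fun _ => Nnat) mu lam (jdx ∘ σ) := by
  replace hSL : P.IsSimplyLaced b := hSL
  obtain ⟨jβ, hβ, -⟩ := hroot
  have hleaf : ∀ r, #{s | (P.dynkinGraph b).Adj (jdx r) (jdx s)} ≤ 1 →
      (Nnat : ℝ) ≤ P.coroot' (b (jdx r)) lam ∧ (Nnat : ℝ) ≤ P.coroot' (b (jdx r)) mu := by
    intro r hr
    by_contra hlt
    obtain ⟨hne, hnotpos⟩ := hF (jdx r) (by rw [min_lt_iff]; by_contra! h; exact hlt h)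
    obtain ⟨j', hj'⟩ := hSL.root_sub_mem_range hcrys hinj hβ hr
      fun he => hne (by rw [← hβ, he, sub_self])
    have hj'sum : P.root j' = ∑ s ∈ univ.erase r, P.root (b (jdx s)) := by
      rw [hj', hβ, sum_erase_eq_sub (Finset.mem_univ r)]
    exact hnotpos ⟨j', by rw [hj', hβ], RootSystem.isPositiveRoot_of_root_eq_sum _ hj'sum⟩
  obtain ⟨ord, hord⟩ := ((P.dynkinGraph b).comap jdx).exists_isFlankingOrder
    (fun T hT => hSL.exists_card_adj_le_one hb.linearIndependent hinj hT) univ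
  refine ⟨Tuple.sort ord, hSL.domSys_const (hinj.comp (Equiv.injective _)) hmu hlam Nnat
    (fun r => ?_) (fun r => ?_)⟩
  · rcases hord.sort r with hdeg | ⟨hbefore, -⟩
    · exact Or.inl (hleaf _ hdeg).1
    · exact Or.inr hbefore
  · rcases hord.sort r with hdeg | ⟨-, hafter⟩
    · exact Or.inl (hleaf _ hdeg).2
    · exact Or.inr hafter

/-- Wahl components, combinatorial content: in a simply-laced root system, if
`β = α_{j_1} + ⋯ + α_{j_t}` is a positive root which is a sum of pairwise distinct simple
roots, `N ≥ 1`, every `i ∈ I` with `min{⟨λ,α_i^∨⟩, ⟨μ,α_i^∨⟩} < N` satisfies that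
`β − α_i` is neither zero nor a positive root, and `λ + μ − Nβ` is dominant, then some
permutation `σ` makes the dominance system `D((N,…,N); μ, λ; j_{σ(1)},…,j_{σ(t)})` hold. -/
theorem wahl_domsys {ι M N' I : Type*} [Fintype ι] [Fintype I]
    [AddCommGroup M] [Module ℝ M] [AddCommGroup N'] [Module ℝ N']
    (P : RootSystem ι ℝ M N') (hcrys : P.IsCrystallographic) (hred : P.IsReduced)
    (b : I → ι) (hb : P.IsBase b)
    (hSL : ∀ i j : I, i ≠ j →
      P.pairing (b i) (b j) = 0 ∨ P.pairing (b i) (b j) = -1)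
    (lam mu : M) (hlam : P.IsDominant b lam) (hmu : P.IsDominant b mu)
    (Nnat : ℕ) (hN : 1 ≤ Nnat)
    {t : ℕ} (jdx : Fin t → I) (hinj : Function.Injective jdx)
    (hroot : ∃ jβ : ι, P.root jβ = ∑ r : Fin t, P.root (b (jdx r)) ∧ P.IsPositiveRoot b jβ)
    (hF : ∀ i : I, min (P.coroot' (b i) lam) (P.coroot' (b i) mu) < (Nnat : ℝ) →
      (∑ r : Fin t, P.root (b (jdx r))) - P.root (b i) ≠ 0 ∧
      ¬ ∃ j' : ι, P.root j' = (∑ r : Fin t, P.root (b (jdx r))) - P.root (b i) ∧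
        P.IsPositiveRoot b j')
    (hdom : P.IsDominant b (lam + mu - (Nnat : ℝ) • ∑ r : Fin t, P.root (b (jdx r)))) :
    ∃ σ : Equiv.Perm (Fin t), P.DomSys b (fun _ => Nnat) mu lam (jdx ∘ σ) :=
  wahl_domsys_general P hcrys b hb hSL lam mu hlam hmu Nnat jdx hinj hroot hF
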